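/- arXiv:math/0202264 — 2 statements merged into one kernel-verified Lean document; each statement's English description precedes it below -/
import Mathlib

section
/- Let T > 0 and ε > 0. Let x, ξ : [0, T] → ℝ be differentiable functions such that x(t) > 0 for all t ∈ [0, T], ξ(0) ≥ −ε, and for all t ∈ [0, T] one has x′(t) = ξ(t)/x(t) and ξ′(t) ≥ 1/2. Then for all t ∈ [0, T], x(t)² ≥ x(0)² + t²/2 − 2εt; in particular x(t)² ≥ t²/2 − 2εt. -/
/-! Comparing derivatives first gives `ξ t ≥ ξ 0 + t / 2 ≥ t / 2 - ε`. Since `x' = ξ / x`, the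
derivative of `x ^ 2` is `2 ξ ≥ t - 2 ε`, the derivative of `t ^ 2 / 2 - 2 ε t`, and comparing
once more bounds the growth of `x ^ 2`. -/

open Set

theorem sub_le_sub_of_hasDerivWithinAt_le {f g f' g' : ℝ → ℝ} {a b : ℝ}
    (hf : ∀ t ∈ Icc a b, HasDerivWithinAt f (f' t) (Icc a b) t)
    (hg : ∀ t ∈ Icc a b, HasDerivWithinAt g (g' t) (Icc a b) t)
    (hle : ∀ t ∈ Ioo a b, g' t ≤ f' t) :
    ∀ t ∈ Icc a b, g t - g a ≤ f t - f a := by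
  have hmono : MonotoneOn (f - g) (Icc a b) := by
    refine monotoneOn_of_hasDerivWithinAt_nonneg (f' := f' - g') (convex_Icc a b)
      (fun t ht ↦ ((hf t ht).sub (hg t ht)).continuousWithinAt) (fun t ht ↦ ?_) (fun t ht ↦ ?_)
    · rw [interior_Icc] at ht ⊢
      exact ((hf t (Ioo_subset_Icc_self ht)).sub (hg t (Ioo_subset_Icc_self ht))).mono
        Ioo_subset_Icc_self
    · rw [interior_Icc] at ht
      exact sub_nonneg.mpr (hle t ht)
  intro t ht
  have := hmono (left_mem_Icc.mpr (ht.1.trans ht.2)) ht ht.1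
  simp only [Pi.sub_apply] at this
  linarith

theorem HasDerivWithinAt.sq_of_div {f : ℝ → ℝ} {g t : ℝ} {s : Set ℝ}
    (hf : HasDerivWithinAt f (g / f t) s t) (hft : f t ≠ 0) :
    HasDerivWithinAt (fun u ↦ f u ^ 2) (2 * g) s t := by
  refine (hf.fun_pow 2).congr_deriv ?_
  field_simp
  ring

theorem conic_escape_estimate_general
    (T ε : ℝ)
    (x ξ ξ' : ℝ → ℝ)
    (hxpos : ∀ t ∈ Set.Icc (0 : ℝ) T, 0 < x t)
    (hξ0 : ξ 0 ≥ -ε)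
    (hx' : ∀ t ∈ Set.Icc (0 : ℝ) T,
      HasDerivWithinAt x (ξ t / x t) (Set.Icc (0 : ℝ) T) t)
    (hξ' : ∀ t ∈ Set.Icc (0 : ℝ) T,
      HasDerivWithinAt ξ (ξ' t) (Set.Icc (0 : ℝ) T) t)
    (hξ'ge : ∀ t ∈ Set.Icc (0 : ℝ) T, ξ' t ≥ 1 / 2) :
    ∀ t ∈ Set.Icc (0 : ℝ) T,
      x t ^ 2 ≥ x 0 ^ 2 + t ^ 2 / 2 - 2 * ε * t ∧
      x t ^ 2 ≥ t ^ 2 / 2 - 2 * ε * t := by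
  have hξ_ge : ∀ t ∈ Icc (0 : ℝ) T, t / 2 - ε ≤ ξ t := by
    intro t ht
    have := sub_le_sub_of_hasDerivWithinAt_le hξ'
      (fun t _ ↦ ((hasDerivAt_id t).div_const 2).hasDerivWithinAt)
      (fun t ht ↦ hξ'ge t (Ioo_subset_Icc_self ht)) t ht
    simp only [id] at this
    linarith
  have hx_sq : ∀ t ∈ Icc (0 : ℝ) T,
      HasDerivWithinAt (fun u ↦ x u ^ 2) (2 * ξ t) (Icc 0 T) t :=
    fun t ht ↦ (hx' t ht).sq_of_div (hxpos t ht).ne'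
  have hquad : ∀ t ∈ Icc (0 : ℝ) T,
      HasDerivWithinAt (fun u ↦ u ^ 2 / 2 - 2 * ε * u) (t - 2 * ε) (Icc 0 T) t := by
    intro t _
    refine (((hasDerivAt_pow 2 t).div_const 2).sub
      ((hasDerivAt_id t).const_mul (2 * ε))).hasDerivWithinAt.congr_deriv ?_
    ring
  intro t ht
  have key := sub_le_sub_of_hasDerivWithinAt_le hx_sq hquad
    (fun t ht ↦ by linarith [hξ_ge t (Ioo_subset_Icc_self ht)]) t ht
  constructor <;> nlinarith [sq_nonneg (x 0)]

/-- Quantitative ODE estimate: if `x, ξ` are differentiable on `[0, T]` with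
`x > 0`, `ξ 0 ≥ -ε`, `x' = ξ / x` and `ξ' ≥ 1/2` on `[0, T]`, then
`x t ^ 2 ≥ x 0 ^ 2 + t ^ 2 / 2 - 2 ε t`, and in particular
`x t ^ 2 ≥ t ^ 2 / 2 - 2 ε t`, for all `t ∈ [0, T]`. -/
theorem conic_escape_estimate
    (T ε : ℝ) (hT : 0 < T) (hε : 0 < ε)
    (x ξ ξ' : ℝ → ℝ)
    (hxpos : ∀ t ∈ Set.Icc (0 : ℝ) T, 0 < x t)
    (hξ0 : ξ 0 ≥ -ε)
    (hx' : ∀ t ∈ Set.Icc (0 : ℝ) T,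
      HasDerivWithinAt x (ξ t / x t) (Set.Icc (0 : ℝ) T) t)
    (hξ' : ∀ t ∈ Set.Icc (0 : ℝ) T,
      HasDerivWithinAt ξ (ξ' t) (Set.Icc (0 : ℝ) T) t)
    (hξ'ge : ∀ t ∈ Set.Icc (0 : ℝ) T, ξ' t ≥ 1 / 2) :
    ∀ t ∈ Set.Icc (0 : ℝ) T,
      x t ^ 2 ≥ x 0 ^ 2 + t ^ 2 / 2 - 2 * ε * t ∧
      x t ^ 2 ≥ t ^ 2 / 2 - 2 * ε * t :=
  conic_escape_estimate_general T ε x ξ ξ' hxpos hξ0 hx' hξ' hξ'ge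
end

section
/- Let t̄ > 0 and 0 < ε ≤ t̄/20, and let T ≥ t̄/2. Let x, ξ : [0, T] → ℝ be differentiable functions such that x(t) > 0 for all t ∈ [0, T], ξ(0) ≥ −ε, and for all t ∈ [0, T] one has x′(t) = ξ(t)/x(t) and ξ′(t) ≥ 1/2. Then x(t) > ε for all t ∈ [t̄/4, t̄/2]. -/
/-!
Since `ξ' ≥ 1/2`, `ξ t ≥ t/2 - ε`. As `(x²)' = 2 x x' = 2ξ ≥ t - 2ε`, integrating gives
`x t ² > t²/2 - 2εt`, and for `t ≥ t̄/4 ≥ 5ε` the right-hand side is at least `5ε²/2`.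
-/

open Set

theorem image_le_of_hasDerivWithinAt_Icc_le {f g f' g' : ℝ → ℝ} {a b : ℝ}
    (hf : ∀ t ∈ Icc a b, HasDerivWithinAt f (f' t) (Icc a b) t)
    (hg : ∀ t ∈ Icc a b, HasDerivWithinAt g (g' t) (Icc a b) t)
    (ha : g a ≤ f a) (hderiv : ∀ t ∈ Ico a b, g' t ≤ f' t) :
    ∀ ⦃t⦄, t ∈ Icc a b → g t ≤ f t := by
  have hright : ∀ {h h' : ℝ → ℝ}, (∀ t ∈ Icc a b, HasDerivWithinAt h (h' t) (Icc a b) t) →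
      ∀ t ∈ Ico a b, HasDerivWithinAt h (h' t) (Ici t) t := fun hh t ht =>
    (hh t (Ico_subset_Icc_self ht)).mono_of_mem_nhdsWithin
      (Filter.mem_of_superset (Icc_mem_nhdsGE ht.2) (Icc_subset_Icc_left ht.1))
  exact image_le_of_deriv_right_le_deriv_boundary
    (fun t ht => (hg t ht).continuousWithinAt) (hright hg) ha
    (fun t ht => (hf t ht).continuousWithinAt) (hright hf) hderiv

theorem HasDerivWithinAt.sq_of_eq_div {x : ℝ → ℝ} {ξ t : ℝ} {s : Set ℝ}
    (hx : HasDerivWithinAt x (ξ / x t) s t) (hxt : x t ≠ 0) :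
    HasDerivWithinAt (fun u => x u ^ 2) (2 * ξ) s t := by
  refine (hx.fun_pow 2).congr_deriv ?_
  rw [pow_one, Nat.cast_ofNat, mul_assoc, mul_div_cancel₀ _ hxt]

theorem conic_no_return_general
    (tbar ε T : ℝ) (hε : 0 < ε) (hεle : ε ≤ tbar / 20)
    (hT : T ≥ tbar / 2)
    (x ξ ξ' : ℝ → ℝ)
    (hxpos : ∀ t ∈ Set.Icc (0 : ℝ) T, 0 < x t)
    (hξ0 : ξ 0 ≥ -ε)
    (hx' : ∀ t ∈ Set.Icc (0 : ℝ) T,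
      HasDerivWithinAt x (ξ t / x t) (Set.Icc (0 : ℝ) T) t)
    (hξ' : ∀ t ∈ Set.Icc (0 : ℝ) T,
      HasDerivWithinAt ξ (ξ' t) (Set.Icc (0 : ℝ) T) t)
    (hξ'ge : ∀ t ∈ Set.Icc (0 : ℝ) T, ξ' t ≥ 1 / 2) :
    ∀ t ∈ Set.Icc (tbar / 4) (tbar / 2), x t > ε := by
  intro t ht
  have htI : t ∈ Icc 0 T := ⟨by linarith [ht.1], ht.2.trans hT⟩
  have h0 : (0 : ℝ) ∈ Icc 0 T := ⟨le_rfl, htI.1.trans htI.2⟩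
  have hξ_ge : ∀ s ∈ Icc 0 T, s / 2 - ε ≤ ξ s := by
    exact image_le_of_hasDerivWithinAt_Icc_le hξ' (g' := fun _ => 1 / 2)
      (fun s _ => ((hasDerivWithinAt_id s _).div_const 2).sub_const ε) (by simpa using hξ0)
      (fun s hs => hξ'ge s (Ico_subset_Icc_self hs))
  have hx_sq : x 0 ^ 2 + (t ^ 2 / 2 - 2 * ε * t) ≤ x t ^ 2 := by
    refine image_le_of_hasDerivWithinAt_Icc_le (f' := fun s => 2 * ξ s)
      (g := fun s => x 0 ^ 2 + (s ^ 2 / 2 - 2 * ε * s)) (g' := fun s => s - 2 * ε)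
      (fun s hs => (hx' s hs).sq_of_eq_div (hxpos s hs).ne') (fun s _ => ?_) (by simp)
      (fun s hs => by linarith [hξ_ge s (Ico_subset_Icc_self hs)]) htI
    refine ((((hasDerivWithinAt_id s _).fun_pow 2).div_const 2).sub
      ((hasDerivWithinAt_id s _).const_mul (2 * ε)) |>.const_add (x 0 ^ 2)).congr_deriv ?_
    simp only [id, Nat.cast_ofNat]
    ring
  have hεsq : ε ^ 2 < x t ^ 2 := by nlinarith [hxpos 0 h0, ht.1]
  exact lt_of_pow_lt_pow_left₀ 2 (hxpos t htI).le hεsq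

/-- If `0 < ε ≤ t̄/20`, `T ≥ t̄/2`, and `x, ξ` are differentiable on `[0, T]`
with `x > 0`, `ξ 0 ≥ -ε`, `x' = ξ / x`, `ξ' ≥ 1/2` on `[0, T]`, then
`x t > ε` for all `t ∈ [t̄/4, t̄/2]`. -/
theorem conic_no_return
    (tbar ε T : ℝ) (htbar : 0 < tbar) (hε : 0 < ε) (hεle : ε ≤ tbar / 20)
    (hT : T ≥ tbar / 2)
    (x ξ ξ' : ℝ → ℝ)
    (hxpos : ∀ t ∈ Set.Icc (0 : ℝ) T, 0 < x t)
    (hξ0 : ξ 0 ≥ -ε)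
    (hx' : ∀ t ∈ Set.Icc (0 : ℝ) T,
      HasDerivWithinAt x (ξ t / x t) (Set.Icc (0 : ℝ) T) t)
    (hξ' : ∀ t ∈ Set.Icc (0 : ℝ) T,
      HasDerivWithinAt ξ (ξ' t) (Set.Icc (0 : ℝ) T) t)
    (hξ'ge : ∀ t ∈ Set.Icc (0 : ℝ) T, ξ' t ≥ 1 / 2) :
    ∀ t ∈ Set.Icc (tbar / 4) (tbar / 2), x t > ε :=
  conic_no_return_general tbar ε T hε hεle hT x ξ ξ' hxpos hξ0 hx' hξ' hξ'ge
end
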